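/- arXiv:2104.02013 — 2 statements merged into one kernel-verified Lean document; each statement's English description precedes it below -/
import Mathlib

section
/- Let (X, P_X) and (Y, P_Y) be finite metric measure spaces equipped with m-pointed partitions. Let S denote the set of probability measures on X × Y of the form μ(x,y) = Σ_{p,q} μ_m(xᵖ,y^q) μ̄_{xᵖ,y^q}(x,y), where μ_m ∈ C(μ_{P_X}, μ_{P_Y}) and each μ_{xᵖ,y^q} ∈ C(μ_{Uᵖ}, μ_{V^q}) (no positivity constraint imposed). Then S is a compact subset of the Euclidean space ℝ^{X×Y}, and if μ_X and μ_Y are fully supported, the infimum defining d_qGW is realized over S: d_qGW((X,P_X),(Y,P_Y)) = min_{μ ∈ S} GW(μ)^{1/2}. -/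
open Finset

noncomputable section

/-- A probability vector on a finite type. -/
def IsProb {X : Type*} [Fintype X] (μ : X → ℝ) : Prop :=
  (∀ x, 0 ≤ μ x) ∧ (∑ x, μ x) = 1

/-- `μ` is a coupling of the probability vectors `μX` and `μY`. -/
def IsCoupling {X Y : Type*} [Fintype X] [Fintype Y]
    (μX : X → ℝ) (μY : Y → ℝ) (μ : X → Y → ℝ) : Prop :=
  (∀ x y, 0 ≤ μ x y) ∧ (∀ x, (∑ y, μ x y) = μX x) ∧ (∀ y, (∑ x, μ x y) = μY y)

/-- The Gromov–Wasserstein loss of a coupling, for given distance functions. -/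
def GWLoss {X Y : Type*} [Fintype X] [Fintype Y]
    (dX : X → X → ℝ) (dY : Y → Y → ℝ) (μ : X → Y → ℝ) : ℝ :=
  ∑ x, ∑ y, ∑ x', ∑ y', (dX x x' - dY y y') ^ 2 * μ x y * μ x' y'

/-- The Gromov–Wasserstein distance between two finite mm-spaces. -/
def dGW {X Y : Type*} [Fintype X] [Fintype Y]
    (dX : X → X → ℝ) (dY : Y → Y → ℝ) (μX : X → ℝ) (μY : Y → ℝ) : ℝ :=
  sInf {r : ℝ | ∃ μ, IsCoupling μX μY μ ∧ r = Real.sqrt (GWLoss dX dY μ)}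

/-- An `m`-pointed partition of `X`: each point is assigned to one of `m` blocks
(`part`), and each block `p` has a distinguished representative `rep p` lying in it.
Blocks are the fibers of `part`; they are disjoint, cover `X`, and are nonempty. -/
structure PointedPartition (X : Type*) (m : ℕ) where
  part : X → Fin m
  rep : Fin m → X
  part_rep : ∀ p, part (rep p) = p

/-- The mass `μ_X(Uᵖ)` of the block `Uᵖ`; as a function of `p` this is the measure
`μ_{P_X}` of the quantized representation `Xᵐ` (identified with `Fin m`). -/
def blockMass {X : Type*} [Fintype X] (μX : X → ℝ) {m : ℕ}
    (P : PointedPartition X m) (p : Fin m) : ℝ :=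
  ∑ x, if P.part x = p then μX x else 0

/-- The normalized measure `μ_{Uᵖ} = μ_X|_{Uᵖ} / μ_X(Uᵖ)` of a block, extended by zero
to all of `X` (this is `μ̄_{Uᵖ}`). -/
def blockMeasure {X : Type*} [Fintype X] (μX : X → ℝ) {m : ℕ}
    (P : PointedPartition X m) (p : Fin m) (x : X) : ℝ :=
  if P.part x = p then μX x / blockMass μX P p else 0

/-- `μ` is a quantization coupling: `μ(x,y) = Σ_{p,q} μm(xᵖ,y^q) μ̄_{xᵖ,y^q}(x,y)` where
`μm` couples the quantized measures and each `ν p q` is (the extension by zero of) a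
coupling of the block measures with `ν p q (xᵖ, y^q) > 0`. -/
def IsQuantCoupling {X Y : Type*} [Fintype X] [Fintype Y] {m : ℕ}
    (μX : X → ℝ) (μY : Y → ℝ)
    (PX : PointedPartition X m) (PY : PointedPartition Y m)
    (μ : X → Y → ℝ) : Prop :=
  ∃ (μm : Fin m → Fin m → ℝ) (ν : Fin m → Fin m → X → Y → ℝ),
    IsCoupling (blockMass μX PX) (blockMass μY PY) μm ∧
    (∀ p q, IsCoupling (blockMeasure μX PX p) (blockMeasure μY PY q) (ν p q)) ∧
    (∀ p q, 0 < ν p q (PX.rep p) (PY.rep q)) ∧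
    (∀ x y, μ x y = ∑ p, ∑ q, μm p q * ν p q x y)

/-- The quantized Gromov–Wasserstein distance between `m`-pointed mm-spaces. -/
def dqGW {X Y : Type*} [Fintype X] [Fintype Y] {m : ℕ}
    (dX : X → X → ℝ) (dY : Y → Y → ℝ) (μX : X → ℝ) (μY : Y → ℝ)
    (PX : PointedPartition X m) (PY : PointedPartition Y m) : ℝ :=
  sInf {r : ℝ | ∃ μ, IsQuantCoupling μX μY PX PY μ ∧ r = Real.sqrt (GWLoss dX dY μ)}

/-- The quantized eccentricity `q(P_X) = (Σ_p μ_X(Uᵖ) s_{Uᵖ}(xᵖ)²)^{1/2}`, where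
`s_{Uᵖ}(xᵖ)² = Σ_{x ∈ Uᵖ} d_X(xᵖ,x)² μ_{Uᵖ}(x)`. -/
def qEcc {X : Type*} [Fintype X] (dX : X → X → ℝ) (μX : X → ℝ) {m : ℕ}
    (P : PointedPartition X m) : ℝ :=
  Real.sqrt (∑ p, blockMass μX P p * ∑ x, dX (P.rep p) x ^ 2 * blockMeasure μX P p x)

/-- The `m`-quantized eccentricity `q_m(X)`: minimum of `q(P_X)` over `m`-pointed
partitions. -/
def qEccMin (X : Type*) [Fintype X] (dX : X → X → ℝ) (μX : X → ℝ) (m : ℕ) : ℝ :=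
  sInf {r : ℝ | ∃ P : PointedPartition X m, r = qEcc dX μX P}

end

/-- The set `S` of measures of quantization-coupling form, with no positivity
constraint imposed on the local couplings. -/
noncomputable def QuantCouplingSet {X Y : Type*} [Fintype X] [Fintype Y] {m : ℕ}
    (μX : X → ℝ) (μY : Y → ℝ)
    (PX : PointedPartition X m) (PY : PointedPartition Y m) : Set (X → Y → ℝ) :=
  {μ | ∃ (μm : Fin m → Fin m → ℝ) (ν : Fin m → Fin m → X → Y → ℝ),
    IsCoupling (blockMass μX PX) (blockMass μY PY) μm ∧
    (∀ p q, IsCoupling (blockMeasure μX PX p) (blockMeasure μY PY q) (ν p q)) ∧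
    (∀ x y, μ x y = ∑ p, ∑ q, μm p q * ν p q x y)}

open Filter Topology

/-! The set `S` is the image of the compact set of coupling parameters `(μm, ν)` under the
continuous map `(μm, ν) ↦ Σ_{p,q} μm p q • ν p q`, hence compact, and the continuous loss
attains its minimum on it. Quantization couplings only add the positivity constraint
`ν p q (xᵖ, y^q) > 0`; when the measures are fully supported, the product of the block
measures satisfies it, and moving every `ν p q` a little towards it shows that quantization
couplings are dense in `S`. So their infimum of the loss is the minimum over `S`. -/

section Coupling

variable {X Y : Type*} [Fintype X] [Fintype Y]

theorem IsCoupling.le_left {μX : X → ℝ} {μY : Y → ℝ} {μ : X → Y → ℝ}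
    (h : IsCoupling μX μY μ) (x : X) (y : Y) : μ x y ≤ μX x :=
  h.2.1 x ▸ single_le_sum (fun y _ => h.1 x y) (mem_univ y)

theorem isClosed_setOf_isCoupling (μX : X → ℝ) (μY : Y → ℝ) :
    IsClosed {μ : X → Y → ℝ | IsCoupling μX μY μ} := by
  simp only [IsCoupling, Set.ofPred_and, Set.ofPred_forall]
  refine .inter (isClosed_iInter fun x => isClosed_iInter fun y => ?_)
    (.inter (isClosed_iInter fun x => ?_) (isClosed_iInter fun y => ?_))
  · exact isClosed_le continuous_const (by fun_prop)
  · exact isClosed_eq (by fun_prop) continuous_const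
  · exact isClosed_eq (by fun_prop) continuous_const

theorem isCompact_setOf_isCoupling (μX : X → ℝ) (μY : Y → ℝ) :
    IsCompact {μ : X → Y → ℝ | IsCoupling μX μY μ} := by
  refine (isCompact_univ_pi fun x => isCompact_univ_pi fun _ => isCompact_Icc (a := 0)
    (b := μX x)).of_isClosed_subset (isClosed_setOf_isCoupling μX μY) fun μ h => ?_
  simp only [Set.mem_univ_pi]
  exact fun x y => ⟨h.1 x y, h.le_left x y⟩

theorem IsCoupling.convexComb {μX : X → ℝ} {μY : Y → ℝ} {ν π : X → Y → ℝ}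
    (hν : IsCoupling μX μY ν) (hπ : IsCoupling μX μY π) {t : ℝ} (ht₀ : 0 ≤ t) (ht₁ : t ≤ 1) :
    IsCoupling μX μY fun x y => (1 - t) * ν x y + t * π x y := by
  refine ⟨fun x y => by nlinarith [hν.1 x y, hπ.1 x y], fun x => ?_, fun y => ?_⟩
  · rw [sum_add_distrib, ← mul_sum, ← mul_sum, hν.2.1 x, hπ.2.1 x]; ring
  · rw [sum_add_distrib, ← mul_sum, ← mul_sum, hν.2.2 y, hπ.2.2 y]; ring

theorem IsProb.isCoupling_mul {μX : X → ℝ} {μY : Y → ℝ} (hX : IsProb μX) (hY : IsProb μY) :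
    IsCoupling μX μY fun x y => μX x * μY y := by
  refine ⟨fun x y => mul_nonneg (hX.1 x) (hY.1 y), fun x => ?_, fun y => ?_⟩
  · rw [← mul_sum, hY.2, mul_one]
  · rw [← sum_mul, hX.2, one_mul]

theorem continuous_GWLoss (dX : X → X → ℝ) (dY : Y → Y → ℝ) :
    Continuous (GWLoss dX dY) := by
  unfold GWLoss
  fun_prop

end Coupling

section Block

variable {X : Type*} [Fintype X] {m : ℕ} {μX : X → ℝ}

theorem le_blockMass (h₀ : ∀ x, 0 ≤ μX x) (P : PointedPartition X m) (x : X) :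
    μX x ≤ blockMass μX P (P.part x) := by
  have := single_le_sum (fun x' _ => (by split_ifs <;> simp [h₀]))
    (mem_univ x) (f := fun x' => if P.part x' = P.part x then μX x' else 0)
  simpa [blockMass] using this

theorem IsProb.blockMass (h : IsProb μX) (P : PointedPartition X m) :
    IsProb (blockMass μX P) := by
  refine ⟨fun p => sum_nonneg fun x _ => by split_ifs <;> simp [h.1], ?_⟩
  unfold _root_.blockMass
  rw [sum_comm]
  simpa using h.2

theorem blockMass_rep_pos (h₀ : ∀ x, 0 ≤ μX x) (P : PointedPartition X m) {p : Fin m}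
    (hp : 0 < μX (P.rep p)) : 0 < blockMass μX P p :=
  P.part_rep p ▸ hp.trans_le (le_blockMass h₀ P (P.rep p))

theorem isProb_blockMeasure (h₀ : ∀ x, 0 ≤ μX x) (P : PointedPartition X m) {p : Fin m}
    (hp : 0 < μX (P.rep p)) : IsProb (blockMeasure μX P p) := by
  have hmass := blockMass_rep_pos h₀ P hp
  refine ⟨fun x => ?_, ?_⟩
  · unfold blockMeasure
    split_ifs
    exacts [div_nonneg (h₀ x) hmass.le, le_rfl]
  · have hrw : ∀ x, blockMeasure μX P p x =
        (if P.part x = p then μX x else 0) / blockMass μX P p :=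
      fun x => by rw [blockMeasure, ite_div, zero_div]
    simp_rw [hrw, ← sum_div]
    exact div_self hmass.ne'

theorem blockMeasure_rep_pos (h₀ : ∀ x, 0 ≤ μX x) (P : PointedPartition X m) {p : Fin m}
    (hp : 0 < μX (P.rep p)) : 0 < blockMeasure μX P p (P.rep p) := by
  rw [blockMeasure, if_pos (P.part_rep p)]
  exact div_pos hp (blockMass_rep_pos h₀ P hp)

end Block

theorem IsCompact.exists_isMinOn_eq_csInf_image {α : Type*} [TopologicalSpace α]
    {A S : Set α} {f : α → ℝ} (hS : IsCompact S) (hA : A.Nonempty) (hAS : A ⊆ S)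
    (hSA : S ⊆ closure A) (hf : Continuous f) :
    ∃ x ∈ S, IsMinOn f S x ∧ sInf (f '' A) = f x := by
  obtain ⟨x, hxS, hmin⟩ := hS.exists_isMinOn (hA.mono hAS) hf.continuousOn
  have hlower : f x ∈ lowerBounds (f '' A) := by
    rintro _ ⟨a, ha, rfl⟩
    exact hmin (hAS ha)
  refine ⟨x, hxS, hmin, le_antisymm ?_ (le_csInf (hA.image f) hlower)⟩
  exact closure_minimal (fun _ h => csInf_le ⟨f x, hlower⟩ h) isClosed_Ici
    (image_closure_subset_closure_image hf ⟨x, hSA hxS, rfl⟩)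

section QuantCoupling

variable {X Y : Type*} {m : ℕ}

def quantCombine (μm : Fin m → Fin m → ℝ) (ν : Fin m → Fin m → X → Y → ℝ) : X → Y → ℝ :=
  fun x y => ∑ p, ∑ q, μm p q * ν p q x y

theorem continuous_quantCombine :
    Continuous (Function.uncurry (quantCombine (X := X) (Y := Y) (m := m))) := by
  unfold quantCombine Function.uncurry
  fun_prop

variable [Fintype X] [Fintype Y] {μX : X → ℝ} {μY : Y → ℝ}
  {PX : PointedPartition X m} {PY : PointedPartition Y m}

theorem quantCouplingSet_eq_image2 :
    QuantCouplingSet μX μY PX PY = Set.image2 quantCombine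
      {μm | IsCoupling (blockMass μX PX) (blockMass μY PY) μm}
      (Set.univ.pi fun p => Set.univ.pi fun q =>
        {ν | IsCoupling (blockMeasure μX PX p) (blockMeasure μY PY q) ν}) := by
  ext μ
  simp only [QuantCouplingSet, Set.mem_image2, Set.mem_ofPred_eq, Set.mem_univ_pi]
  constructor
  · rintro ⟨μm, ν, hμm, hν, hμ⟩
    exact ⟨μm, hμm, ν, hν, funext fun x => funext fun y => (hμ x y).symm⟩
  · rintro ⟨μm, hμm, ν, hν, rfl⟩
    exact ⟨μm, ν, hμm, hν, fun _ _ => rfl⟩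

theorem isCompact_quantCouplingSet (μX : X → ℝ) (μY : Y → ℝ)
    (PX : PointedPartition X m) (PY : PointedPartition Y m) :
    IsCompact (QuantCouplingSet μX μY PX PY) := by
  rw [quantCouplingSet_eq_image2, ← Set.image_uncurry_prod]
  exact ((isCompact_setOf_isCoupling _ _).prod (isCompact_univ_pi fun _ =>
    isCompact_univ_pi fun _ => isCompact_setOf_isCoupling _ _)).image continuous_quantCombine

theorem IsQuantCoupling.mem_quantCouplingSet {μ : X → Y → ℝ}
    (h : IsQuantCoupling μX μY PX PY μ) : μ ∈ QuantCouplingSet μX μY PX PY :=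
  let ⟨μm, ν, hμm, hν, _, hμ⟩ := h
  ⟨μm, ν, hμm, hν, hμ⟩

theorem exists_blockCouplings_rep_pos (hX₀ : ∀ x, 0 ≤ μX x) (hY₀ : ∀ y, 0 ≤ μY y)
    (hX : ∀ p, 0 < μX (PX.rep p)) (hY : ∀ q, 0 < μY (PY.rep q)) :
    ∃ π : Fin m → Fin m → X → Y → ℝ,
      (∀ p q, IsCoupling (blockMeasure μX PX p) (blockMeasure μY PY q) (π p q)) ∧
      ∀ p q, 0 < π p q (PX.rep p) (PY.rep q) :=
  ⟨fun p q x y => blockMeasure μX PX p x * blockMeasure μY PY q y,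
    fun p q => (isProb_blockMeasure hX₀ PX (hX p)).isCoupling_mul
      (isProb_blockMeasure hY₀ PY (hY q)),
    fun p q => mul_pos (blockMeasure_rep_pos hX₀ PX (hX p))
      (blockMeasure_rep_pos hY₀ PY (hY q))⟩

theorem quantCouplingSet_subset_closure {π : Fin m → Fin m → X → Y → ℝ}
    (hπ : ∀ p q, IsCoupling (blockMeasure μX PX p) (blockMeasure μY PY q) (π p q))
    (hπpos : ∀ p q, 0 < π p q (PX.rep p) (PY.rep q)) :
    QuantCouplingSet μX μY PX PY ⊆ closure {μ | IsQuantCoupling μX μY PX PY μ} := by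
  rintro μ ⟨μm, ν, hμm, hν, hμ⟩
  let path : ℝ → X → Y → ℝ := fun t =>
    quantCombine μm fun p q x y => (1 - t) * ν p q x y + t * π p q x y
  have hpath : Continuous path := by
    unfold path quantCombine
    fun_prop
  have hpath₀ : path 0 = μ := by
    funext x y
    simp [path, quantCombine, hμ]
  have hlim : Tendsto path (𝓝[>] 0) (𝓝 μ) :=
    hpath₀ ▸ (hpath.tendsto 0).mono_left nhdsWithin_le_nhds
  refine mem_closure_of_tendsto hlim ?_
  filter_upwards [Ioc_mem_nhdsGT zero_lt_one] with t ⟨ht₀, ht₁⟩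
  exact ⟨μm, _, hμm, fun p q => (hν p q).convexComb (hπ p q) ht₀.le ht₁,
    fun p q => add_pos_of_nonneg_of_pos (mul_nonneg (sub_nonneg.2 ht₁) ((hν p q).1 _ _))
      (mul_pos ht₀ (hπpos p q)), fun _ _ => rfl⟩

end QuantCoupling

/-- `S` is compact, and for fully supported measures the infimum defining
quantized GW distance is realized over `S`. -/
theorem quantCouplingSet_compact_and_dqGW_attained
    {X Y : Type*} [Fintype X] [Fintype Y] [MetricSpace X] [MetricSpace Y] {m : ℕ}
    (μX : X → ℝ) (μY : Y → ℝ) (hμX : IsProb μX) (hμY : IsProb μY)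
    (PX : PointedPartition X m) (PY : PointedPartition Y m) :
    IsCompact (QuantCouplingSet μX μY PX PY) ∧
    ((∀ x, 0 < μX x) → (∀ y, 0 < μY y) →
      ∃ μ₀ ∈ QuantCouplingSet μX μY PX PY,
        (∀ μ' ∈ QuantCouplingSet μX μY PX PY,
          Real.sqrt (GWLoss (fun x x' => dist x x') (fun y y' => dist y y') μ₀) ≤
            Real.sqrt (GWLoss (fun x x' => dist x x') (fun y y' => dist y y') μ')) ∧
        dqGW (fun x x' => dist x x') (fun y y' => dist y y') μX μY PX PY =
          Real.sqrt (GWLoss (fun x x' => dist x x') (fun y y' => dist y y') μ₀)) := by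
  refine ⟨isCompact_quantCouplingSet μX μY PX PY, fun hX hY => ?_⟩
  obtain ⟨π, hπ, hπpos⟩ :=
    exists_blockCouplings_rep_pos hμX.1 hμY.1 (fun p => hX (PX.rep p)) (fun q => hY (PY.rep q))
  have hne : {μ | IsQuantCoupling μX μY PX PY μ}.Nonempty :=
    ⟨_, _, π, (hμX.blockMass PX).isCoupling_mul (hμY.blockMass PY), hπ, hπpos,
      fun _ _ => rfl⟩
  obtain ⟨μ₀, hμ₀, hmin, hinf⟩ :=
    (isCompact_quantCouplingSet μX μY PX PY).exists_isMinOn_eq_csInf_image hne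
      (fun _ => IsQuantCoupling.mem_quantCouplingSet) (quantCouplingSet_subset_closure hπ hπpos)
      (continuous_GWLoss _ _).sqrt
  refine ⟨μ₀, hμ₀, fun μ' h => hmin h, ?_⟩
  rw [dqGW, ← hinf]
  congr 1
  ext r
  simp [eq_comm]
end

section
/- Let X be a finite metric measure space and m ≥ 1 with m ≤ |X|. Then the minimum over all m-pointed partitions P_X of X of the Gromov–Wasserstein distance between X and the quantized representation Xᵐ determined by P_X satisfies min_{P_X} d_GW(X, Xᵐ) ≤ 2 q_m(X), where q_m(X) is the m-quantized eccentricity of X. -/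
open Finset

/-!
Send every point to the representative of its block, `π = P.rep ∘ P.part`. The graph of `π`
couples `μ_X` with the quantized measure, and its Gromov–Wasserstein loss is
`Σ (d(x,x') - d(π x, π x'))² μ(x) μ(x')`. By the triangle inequality each term is at most
`(d(x,π x) + d(x',π x'))² ≤ 2 d(x,π x)² + 2 d(x',π x')²`, so the loss is at most
`4 Σ d(x,π x)² μ(x) = 4 q(P_X)²`. Taking infima over pointed partitions gives the bound.
-/

open Finset

section GraphCoupling

variable {X Y : Type*} [Fintype X] [Fintype Y]

lemma dGW_nonneg (dX : X → X → ℝ) (dY : Y → Y → ℝ) (μX : X → ℝ) (μY : Y → ℝ) :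
    0 ≤ dGW dX dY μX μY :=
  Real.sInf_nonneg fun _ ⟨_, _, hr⟩ => hr ▸ Real.sqrt_nonneg _

lemma dGW_le_sqrt_GWLoss {dX : X → X → ℝ} {dY : Y → Y → ℝ} {μX : X → ℝ} {μY : Y → ℝ}
    {μ : X → Y → ℝ} (hμ : IsCoupling μX μY μ) : dGW dX dY μX μY ≤ √(GWLoss dX dY μ) :=
  csInf_le ⟨0, fun _ ⟨_, _, hr⟩ => hr ▸ Real.sqrt_nonneg _⟩ ⟨μ, hμ, rfl⟩

variable [DecidableEq Y]

def graphCoupling (f : X → Y) (μ : X → ℝ) (x : X) (y : Y) : ℝ :=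
  if f x = y then μ x else 0

lemma isCoupling_graphCoupling {μ : X → ℝ} (hμ : ∀ x, 0 ≤ μ x) (f : X → Y) :
    IsCoupling μ (fun y => ∑ x, if f x = y then μ x else 0) (graphCoupling f μ) := by
  refine ⟨fun x y => ?_, fun x => ?_, fun y => rfl⟩
  · unfold graphCoupling
    split_ifs
    exacts [hμ x, le_rfl]
  · simp [graphCoupling]

lemma GWLoss_graphCoupling (dX : X → X → ℝ) (dY : Y → Y → ℝ) (f : X → Y) (μ : X → ℝ) :
    GWLoss dX dY (graphCoupling f μ) =
      ∑ x, ∑ x', (dX x x' - dY (f x) (f x')) ^ 2 * μ x * μ x' := by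
  unfold GWLoss
  refine sum_congr rfl fun x _ => ?_
  rw [sum_comm]
  refine sum_congr rfl fun x' _ => ?_
  simp [graphCoupling, mul_ite, ite_mul]

end GraphCoupling

section PointedPartition

variable {X : Type*} [Fintype X] {m : ℕ}

lemma blockMass_mul_sum_blockMeasure {μ : X → ℝ} (hμ : ∀ x, 0 ≤ μ x)
    (P : PointedPartition X m) (p : Fin m) (f : X → ℝ) :
    blockMass μ P p * ∑ x, f x * blockMeasure μ P p x =
      ∑ x, if P.part x = p then f x * μ x else 0 := by
  rw [mul_sum]
  refine sum_congr rfl fun x _ => ?_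
  unfold blockMeasure
  split_ifs with hx
  · rcases eq_or_ne (blockMass μ P p) 0 with h0 | h0
    · -- here `μ x / 0 = 0`, which is harmless because the block, hence `x`, has mass zero
      have hμx : μ x = 0 := by
        simpa [hx] using (sum_eq_zero_iff_of_nonneg fun y _ => by
          split_ifs <;> simp [hμ y]).mp h0 x (mem_univ x)
      simp [hμx]
    · field_simp
  · simp

lemma qEcc_eq_sqrt_sum {μ : X → ℝ} (hμ : ∀ x, 0 ≤ μ x) (d : X → X → ℝ)
    (P : PointedPartition X m) :
    qEcc d μ P = √(∑ x, d (P.rep (P.part x)) x ^ 2 * μ x) := by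
  unfold qEcc
  simp_rw [blockMass_mul_sum_blockMeasure hμ P]
  rw [sum_comm]
  simp

end PointedPartition

section PseudoMetric

variable {X : Type*} [PseudoMetricSpace X]

lemma sq_dist_sub_dist_le (x x' y y' : X) :
    (dist x x' - dist y y') ^ 2 ≤ 2 * (dist y x ^ 2 + dist y' x' ^ 2) := by
  have h : |dist x x' - dist y y'| ≤ dist y x + dist y' x' := by
    rw [← Real.dist_eq, dist_comm y x, dist_comm y' x']
    exact dist_dist_dist_le x x' y y'
  calc (dist x x' - dist y y') ^ 2 ≤ (dist y x + dist y' x') ^ 2 :=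
        sq_le_sq' (abs_le.mp h).1 (abs_le.mp h).2
    _ ≤ 2 * (dist y x ^ 2 + dist y' x' ^ 2) := add_sq_le

variable [Fintype X]

lemma sum_sum_sq_dist_sub_dist_comp_le {μ : X → ℝ} (hμ : IsProb μ) (π : X → X) :
    ∑ x, ∑ x', (dist x x' - dist (π x) (π x')) ^ 2 * μ x * μ x' ≤
      4 * ∑ x, dist (π x) x ^ 2 * μ x := by
  set e : X → ℝ := fun x => dist (π x) x ^ 2 * μ x
  calc ∑ x, ∑ x', (dist x x' - dist (π x) (π x')) ^ 2 * μ x * μ x'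
      ≤ ∑ x, ∑ x', 2 * (dist (π x) x ^ 2 + dist (π x') x' ^ 2) * μ x * μ x' := by
        gcongr with x _ x' _
        · exact hμ.1 x'
        · exact hμ.1 x
        · exact sq_dist_sub_dist_le x x' (π x) (π x')
    _ = 2 * (∑ x, e x) * ∑ x', μ x' + 2 * (∑ x, μ x) * ∑ x', e x' := by
        simp only [e, mul_sum, sum_mul, ← sum_add_distrib]
        refine sum_congr rfl fun x _ => sum_congr rfl fun x' _ => ?_
        ring
    _ = 4 * ∑ x, e x := by
        rw [hμ.2]
        ring

theorem dGW_quantized_le_two_qEcc {m : ℕ} {μ : X → ℝ} (hμ : IsProb μ)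
    (P : PointedPartition X m) :
    dGW (fun x x' => dist x x') (fun p q => dist (P.rep p) (P.rep q)) μ (blockMass μ P) ≤
      2 * qEcc (fun x x' => dist x x') μ P :=
  calc _ ≤ √(GWLoss (fun x x' => dist x x') (fun p q => dist (P.rep p) (P.rep q))
          (graphCoupling P.part μ)) :=
        dGW_le_sqrt_GWLoss (isCoupling_graphCoupling hμ.1 P.part)
    _ ≤ √(4 * ∑ x, dist (P.rep (P.part x)) x ^ 2 * μ x) := by
        rw [GWLoss_graphCoupling]
        exact Real.sqrt_le_sqrt (sum_sum_sq_dist_sub_dist_comp_le hμ _)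
    _ = 2 * qEcc (fun x x' => dist x x') μ P := by
        rw [qEcc_eq_sqrt_sum hμ.1, Real.sqrt_mul (by norm_num),
          show (4 : ℝ) = 2 ^ 2 by norm_num, Real.sqrt_sq zero_le_two]

end PseudoMetric

lemma sInf_setOf_exists_eq {ι : Sort*} (f : ι → ℝ) : sInf {r | ∃ i, r = f i} = ⨅ i, f i := by
  show _ = sInf (Set.range f)
  congr 1
  ext r
  simp [eq_comm]

theorem min_dGW_quantized_representation_le_two_qEccMin_general
    {X : Type*} [Fintype X] [MetricSpace X]
    (μX : X → ℝ) (hμX : IsProb μX) (m : ℕ) :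
    sInf {r : ℝ | ∃ P : PointedPartition X m,
        r = dGW (fun x x' => dist x x') (fun p q => dist (P.rep p) (P.rep q))
          μX (blockMass μX P)} ≤
      2 * qEccMin X (fun x x' => dist x x') μX m := by
  rw [qEccMin, sInf_setOf_exists_eq, sInf_setOf_exists_eq,
    Real.mul_iInf_of_nonneg zero_le_two]
  exact ciInf_mono ⟨0, Set.forall_mem_range.2 fun _ => dGW_nonneg _ _ _ _⟩
    fun P => dGW_quantized_le_two_qEcc hμX P

/-- `min_{P_X} d_GW(X, Xᵐ) ≤ 2 q_m(X)`. -/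
theorem min_dGW_quantized_representation_le_two_qEccMin
    {X : Type*} [Fintype X] [MetricSpace X]
    (μX : X → ℝ) (hμX : IsProb μX) (m : ℕ) (hm : 1 ≤ m) (hmX : m ≤ Fintype.card X) :
    sInf {r : ℝ | ∃ P : PointedPartition X m,
        r = dGW (fun x x' => dist x x') (fun p q => dist (P.rep p) (P.rep q))
          μX (blockMass μX P)} ≤
      2 * qEccMin X (fun x x' => dist x x') μX m :=
  min_dGW_quantized_representation_le_two_qEccMin_general μX hμX m
end
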